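/- arXiv:1112.2679 — 3 statements merged into one kernel-verified Lean document; each statement's English description precedes it below -/
import Mathlib

section
/- Let F be an index set with supp(x̄) ⊆ F and |F| = s, and assume ρ(E,s) ≤ Δλ/2. Let x(F) be any unit vector supported on F that maximizes xᵀAx over unit vectors supported on F (equivalently, a unit leading eigenvector of A_F extended by zeros). Then, for an appropriate choice of sign, min(‖x(F) - x̄‖, ‖x(F) + x̄‖) ≤ δ(s). -/
/-!
Write `xF = c • xbar + r` with `c = xbar ⬝ᵥ xF`, so that `r ⊥ xbar`, `r` is supported on `F` and
`‖r‖² = 1 - c²`. As `xF` maximises the Rayleigh quotient of `A = Abar + E` among vectors supported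
on `F`, the first-order condition gives `r ⬝ᵥ A xF = μ ‖r‖²` with `μ = xF ⬝ᵥ A xF ≥ λ - ρ`.
On the other side `r ⬝ᵥ Abar xbar = 0`, the spectral gap gives `r ⬝ᵥ Abar r ≤ (λ - Δλ) ‖r‖²`, and
every term involving `E` is at most `ρ` times the norms since all vectors live on `F`. Hence
`(Δλ - 2ρ)(1 - c²) ≤ |c| ρ √(1 - c²)`, i.e. `(1 - c²)(ρ² + (Δλ - 2ρ)²) ≤ ρ²`, and one concludes with
`min(‖xF - xbar‖, ‖xF + xbar‖)² = 2 - 2|c| ≤ 2 (1 - c²)`.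
-/

namespace TPaper

noncomputable def nrm2 {p : ℕ} (x : Fin p → ℝ) : ℝ := Real.sqrt (∑ i, x i ^ 2)

def dotp {p : ℕ} (x y : Fin p → ℝ) : ℝ := ∑ i, x i * y i

noncomputable def supp {p : ℕ} (x : Fin p → ℝ) : Finset (Fin p) :=
  Finset.univ.filter fun i => x i ≠ 0

def subm {p : ℕ} (A : Matrix (Fin p) (Fin p) ℝ) (F : Finset (Fin p)) :
    Matrix {i // i ∈ F} {i // i ∈ F} ℝ :=
  A.submatrix Subtype.val Subtype.val

noncomputable def specNorm {n : Type*} [Fintype n] [DecidableEq n]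
    (B : Matrix n n ℝ) : ℝ :=
  sSup {r : ℝ | ∃ μ ∈ spectrum ℝ B, r = |μ|}

noncomputable def rhoRes {p : ℕ} (E : Matrix (Fin p) (Fin p) ℝ) (s : ℕ) : ℝ :=
  sSup {r : ℝ | ∃ F : Finset (Fin p), F.card = s ∧ r = specNorm (subm E F)}

def Trunc {p : ℕ} (x : Fin p → ℝ) (F : Finset (Fin p)) : Fin p → ℝ :=
  fun i => if i ∈ F then x i else 0

def IsTopK {p : ℕ} (y : Fin p → ℝ) (k : ℕ) (F : Finset (Fin p)) : Prop :=
  F.card = k ∧ ∀ i ∈ F, ∀ j ∉ F, |y j| ≤ |y i|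

noncomputable def maxEig {n : Type*} [Fintype n] [DecidableEq n]
    (B : Matrix n n ℝ) : ℝ :=
  sSup (spectrum ℝ B)

noncomputable def eigList {n : Type*} [Fintype n] [DecidableEq n] {B : Matrix n n ℝ}
    (hB : B.IsHermitian) : List ℝ :=
  ((Finset.univ.val.map hB.eigenvalues).sort (· ≤ ·)).reverse

open Matrix

lemma dotProduct_self_nonneg {n : Type*} [Fintype n] (v : n → ℝ) : 0 ≤ v ⬝ᵥ v :=
  Fintype.sum_nonneg fun i => mul_self_nonneg (v i)

lemma _root_.Matrix.IsHermitian.dotProduct_mulVec_comm {n : Type*} [Fintype n]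
    {B : Matrix n n ℝ} (hB : B.IsHermitian) (x y : n → ℝ) : x ⬝ᵥ B *ᵥ y = y ⬝ᵥ B *ᵥ x := by
  have hBt : Bᵀ = B := by rwa [Matrix.IsHermitian, conjTranspose_eq_transpose_of_trivial] at hB
  rw [dotProduct_mulVec, ← mulVec_transpose, hBt, dotProduct_comm]

section Spectral

variable {n : Type*} [Fintype n] [DecidableEq n] {B : Matrix n n ℝ}

lemma specNorm_nonneg (B : Matrix n n ℝ) : 0 ≤ specNorm B :=
  Real.sSup_nonneg <| by
    rintro _ ⟨μ, -, rfl⟩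
    exact abs_nonneg μ

lemma abs_eigenvalues_le_specNorm (hB : B.IsHermitian) (i : n) :
    |hB.eigenvalues i| ≤ specNorm B := by
  refine le_csSup ?_ ⟨_, hB.eigenvalues_mem_spectrum_real i, rfl⟩
  refine ((Matrix.finite_real_spectrum (A := B)).image fun μ => |μ|).bddAbove.mono ?_
  rintro _ ⟨μ, hμ, rfl⟩
  exact ⟨μ, hμ, rfl⟩

lemma sum_eigenvectorBasis_dotProduct_mul (hB : B.IsHermitian) (x y : n → ℝ) :
    ∑ i, ((hB.eigenvectorBasis i : n → ℝ) ⬝ᵥ x) * ((hB.eigenvectorBasis i : n → ℝ) ⬝ᵥ y) =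
      x ⬝ᵥ y := by
  simpa [PiLp.inner_apply, dotProduct, mul_comm] using
    hB.eigenvectorBasis.sum_inner_mul_inner (WithLp.toLp 2 x) (WithLp.toLp 2 y)

lemma eigenvectorBasis_dotProduct_mulVec (hB : B.IsHermitian) (i : n) (y : n → ℝ) :
    (hB.eigenvectorBasis i : n → ℝ) ⬝ᵥ B *ᵥ y =
      hB.eigenvalues i * ((hB.eigenvectorBasis i : n → ℝ) ⬝ᵥ y) := by
  rw [hB.dotProduct_mulVec_comm, hB.mulVec_eigenvectorBasis, dotProduct_smul, smul_eq_mul,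
    dotProduct_comm]

lemma dotProduct_mulVec_eq_sum_eigenvalues (hB : B.IsHermitian) (x y : n → ℝ) :
    x ⬝ᵥ B *ᵥ y = ∑ i, hB.eigenvalues i *
      (((hB.eigenvectorBasis i : n → ℝ) ⬝ᵥ x) * ((hB.eigenvectorBasis i : n → ℝ) ⬝ᵥ y)) := by
  rw [← sum_eigenvectorBasis_dotProduct_mul hB x (B *ᵥ y)]
  refine Finset.sum_congr rfl fun i _ => ?_
  rw [eigenvectorBasis_dotProduct_mulVec]
  ring

lemma abs_dotProduct_mulVec_le (hB : B.IsHermitian) (x y : n → ℝ) :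
    |x ⬝ᵥ B *ᵥ y| ≤ specNorm B * (√(x ⬝ᵥ x) * √(y ⬝ᵥ y)) := by
  set c : n → ℝ := fun i => (hB.eigenvectorBasis i : n → ℝ) ⬝ᵥ x
  set d : n → ℝ := fun i => (hB.eigenvectorBasis i : n → ℝ) ⬝ᵥ y
  have hsq (f : n → ℝ) : ∑ i, |f i| ^ 2 = ∑ i, f i * f i :=
    Finset.sum_congr rfl fun i _ => by rw [sq_abs, sq]
  rw [dotProduct_mulVec_eq_sum_eigenvalues hB, ← sum_eigenvectorBasis_dotProduct_mul hB x x,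
    ← sum_eigenvectorBasis_dotProduct_mul hB y y]
  calc |∑ i, hB.eigenvalues i * (c i * d i)|
      ≤ ∑ i, specNorm B * (|c i| * |d i|) := by
        refine (Finset.abs_sum_le_sum_abs _ _).trans (Finset.sum_le_sum fun i _ => ?_)
        rw [abs_mul, abs_mul]
        exact mul_le_mul_of_nonneg_right (abs_eigenvalues_le_specNorm hB i) (by positivity)
    _ ≤ specNorm B * (√(∑ i, c i * c i) * √(∑ i, d i * d i)) := by
        rw [← Finset.mul_sum, ← hsq c, ← hsq d]
        exact mul_le_mul_of_nonneg_left (Real.sum_mul_le_sqrt_mul_sqrt _ _ _)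
          (specNorm_nonneg B)

lemma eigenvectorBasis_dotProduct_eq_zero (hB : B.IsHermitian) {lam : ℝ} {x : n → ℝ}
    (hx : B *ᵥ x = lam • x) {i : n} (hi : hB.eigenvalues i ≠ lam) :
    (hB.eigenvectorBasis i : n → ℝ) ⬝ᵥ x = 0 := by
  have h := eigenvectorBasis_dotProduct_mulVec hB i x
  rw [hx, dotProduct_smul, smul_eq_mul, ← sub_eq_zero, ← sub_mul] at h
  exact (mul_eq_zero.1 h).resolve_left (sub_ne_zero.2 hi.symm)

lemma dotProduct_mulVec_le_of_dotProduct_eq_zero (hB : B.IsHermitian) {i₀ : n} {κ lam : ℝ}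
    (hκ : ∀ j ≠ i₀, hB.eigenvalues j ≤ κ) (hκlam : κ < lam) {x : n → ℝ}
    (hx : B *ᵥ x = lam • x) (hx0 : x ≠ 0) {w : n → ℝ} (hw : x ⬝ᵥ w = 0) :
    w ⬝ᵥ B *ᵥ w ≤ κ * (w ⬝ᵥ w) := by
  set e : n → ℝ := fun i => (hB.eigenvectorBasis i : n → ℝ) ⬝ᵥ x
  have hsum (f : n → ℝ) : ∑ j, e j * f j = e i₀ * f i₀ :=
    Fintype.sum_eq_single i₀ fun j hj => by
      simp only [e]
      rw [eigenvectorBasis_dotProduct_eq_zero hB hx ((hκ j hj).trans_lt hκlam).ne, zero_mul]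
  have he : e i₀ ≠ 0 := by
    intro h
    apply hx0
    rw [← dotProduct_self_eq_zero, ← sum_eigenvectorBasis_dotProduct_mul hB, hsum, h, zero_mul]
  have hc : (hB.eigenvectorBasis i₀ : n → ℝ) ⬝ᵥ w = 0 := by
    have h := sum_eigenvectorBasis_dotProduct_mul hB x w
    rw [hsum, hw] at h
    exact (mul_eq_zero.1 h).resolve_left he
  rw [dotProduct_mulVec_eq_sum_eigenvalues hB, ← sum_eigenvectorBasis_dotProduct_mul hB w w,
    Finset.mul_sum]
  refine Finset.sum_le_sum fun j _ => ?_
  by_cases hj : j = i₀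
  · simp [hj, hc]
  · exact mul_le_mul_of_nonneg_right (hκ j hj) (mul_self_nonneg _)

end Spectral

section Rayleigh

variable {n : Type*} [Fintype n] {A : Matrix n n ℝ} (S : Submodule ℝ (n → ℝ))

lemma dotProduct_mulVec_le_mul_dotProduct {μ : ℝ}
    (hmax : ∀ z ∈ S, z ⬝ᵥ z = 1 → z ⬝ᵥ A *ᵥ z ≤ μ) {z : n → ℝ} (hz : z ∈ S) :
    z ⬝ᵥ A *ᵥ z ≤ μ * (z ⬝ᵥ z) := by
  rcases eq_or_ne z 0 with rfl | hz0
  · simp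
  have hpos : 0 < z ⬝ᵥ z :=
    (dotProduct_self_nonneg z).lt_of_ne' (dotProduct_self_eq_zero.not.2 hz0)
  set a := (√(z ⬝ᵥ z))⁻¹
  have ha : a ^ 2 * (z ⬝ᵥ z) = 1 := by
    rw [inv_pow, Real.sq_sqrt hpos.le, inv_mul_cancel₀ hpos.ne']
  have h := hmax (a • z) (S.smul_mem a hz) (by
    rw [smul_dotProduct, dotProduct_smul, smul_eq_mul, smul_eq_mul, ← ha]; ring)
  rw [mulVec_smul, smul_dotProduct, dotProduct_smul, smul_eq_mul, smul_eq_mul] at h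
  calc z ⬝ᵥ A *ᵥ z = (z ⬝ᵥ z) * (a * (a * (z ⬝ᵥ A *ᵥ z))) := by
        linear_combination -(z ⬝ᵥ A *ᵥ z) * ha
    _ ≤ (z ⬝ᵥ z) * μ := mul_le_mul_of_nonneg_left h hpos.le
    _ = μ * (z ⬝ᵥ z) := mul_comm _ _

lemma dotProduct_mulVec_eq_of_isMax (hA : A.IsHermitian) {v : n → ℝ} (hvS : v ∈ S)
    (hv : v ⬝ᵥ v = 1) (hmax : ∀ z ∈ S, z ⬝ᵥ z = 1 → z ⬝ᵥ A *ᵥ z ≤ v ⬝ᵥ A *ᵥ v)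
    {r : n → ℝ} (hr : r ∈ S) :
    r ⬝ᵥ A *ᵥ v = (v ⬝ᵥ A *ᵥ v) * (r ⬝ᵥ v) := by
  set μ := v ⬝ᵥ A *ᵥ v
  have hquad : ∀ t : ℝ,
      0 ≤ (μ * (r ⬝ᵥ r) - r ⬝ᵥ A *ᵥ r) * (t * t) + 2 * (μ * (r ⬝ᵥ v) - r ⬝ᵥ A *ᵥ v) * t
        + 0 := by
    intro t
    have h := dotProduct_mulVec_le_mul_dotProduct S hmax (S.add_mem hvS (S.smul_mem t hr))
    simp only [mulVec_add, mulVec_smul, add_dotProduct, dotProduct_add, smul_dotProduct,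
      dotProduct_smul, smul_eq_mul, dotProduct_comm v r, hA.dotProduct_mulVec_comm v r, hv] at h
    linarith
  have hdisc := discrim_le_zero hquad
  rw [discrim, mul_zero, sub_zero] at hdisc
  linarith [pow_eq_zero_iff two_ne_zero |>.1 (le_antisymm hdisc (sq_nonneg _))]

end Rayleigh

lemma sq_mul_le_sq_of_mul_le_mul_sqrt {g t a : ℝ} (hg : 0 ≤ g) (h : g * t ≤ a * √t) :
    g ^ 2 * t ≤ a ^ 2 := by
  rcases le_or_gt t 0 with ht | ht
  · exact (mul_nonpos_of_nonneg_of_nonpos (sq_nonneg g) ht).trans (sq_nonneg a)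
  have h' : g * √t ≤ a := by
    nth_rw 1 [← Real.mul_self_sqrt ht.le] at h
    rw [← mul_assoc] at h
    exact le_of_mul_le_mul_right h (Real.sqrt_pos.2 ht)
  calc g ^ 2 * t = (g * √t) ^ 2 := by rw [mul_pow, Real.sq_sqrt ht.le]
    _ ≤ a ^ 2 := pow_le_pow_left₀ (by positivity) h' 2

section SinTheta

variable {n : Type*} [Fintype n] {Abar E : Matrix n n ℝ} {S : Submodule ℝ (n → ℝ)}
  {lam κ ρ : ℝ} {u v : n → ℝ}

lemma sub_mul_one_sub_sq_le (hA : (Abar + E).IsHermitian) (huS : u ∈ S) (hvS : v ∈ S)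
    (hu : u ⬝ᵥ u = 1) (hv : v ⬝ᵥ v = 1) (hAu : Abar *ᵥ u = lam • u)
    (hgap : ∀ w, u ⬝ᵥ w = 0 → w ⬝ᵥ Abar *ᵥ w ≤ κ * (w ⬝ᵥ w))
    (hE : ∀ x ∈ S, ∀ y ∈ S, |x ⬝ᵥ E *ᵥ y| ≤ ρ * (√(x ⬝ᵥ x) * √(y ⬝ᵥ y)))
    (hmax : ∀ z ∈ S, z ⬝ᵥ z = 1 → z ⬝ᵥ (Abar + E) *ᵥ z ≤ v ⬝ᵥ (Abar + E) *ᵥ v) :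
    (lam - κ - 2 * ρ) * (1 - (u ⬝ᵥ v) ^ 2) ≤ |u ⬝ᵥ v| * ρ * √(1 - (u ⬝ᵥ v) ^ 2) := by
  set c := u ⬝ᵥ v
  set r := v - c • u
  have hrS : r ∈ S := S.sub_mem hvS (S.smul_mem c huS)
  have hur : u ⬝ᵥ r = 0 := by
    simp only [r, dotProduct_sub, dotProduct_smul, smul_eq_mul, hu]
    ring
  have hrv : r ⬝ᵥ v = 1 - c ^ 2 := by
    simp only [r, sub_dotProduct, smul_dotProduct, smul_eq_mul, hv]
    ring
  have hrr : r ⬝ᵥ r = 1 - c ^ 2 := by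
    rw [← hrv]
    nth_rw 2 [show r = v - c • u from rfl]
    rw [dotProduct_sub, dotProduct_smul, dotProduct_comm r u, hur, smul_zero, sub_zero]
  have hμ : lam - ρ ≤ v ⬝ᵥ (Abar + E) *ᵥ v := by
    have hEuu := hE u huS u huS
    rw [hu, Real.sqrt_one, mul_one, mul_one] at hEuu
    have huAu : u ⬝ᵥ (Abar + E) *ᵥ u = lam + u ⬝ᵥ E *ᵥ u := by
      rw [add_mulVec, dotProduct_add, hAu, dotProduct_smul, smul_eq_mul, hu, mul_one]
    linarith [hmax u huS hu, (abs_le.1 hEuu).1]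
  have hrAv : r ⬝ᵥ (Abar + E) *ᵥ v = c * (r ⬝ᵥ E *ᵥ u) + r ⬝ᵥ Abar *ᵥ r + r ⬝ᵥ E *ᵥ r := by
    have hv' : v = c • u + r := by simp [r]
    rw [hv', mulVec_add, mulVec_smul, add_mulVec, add_mulVec, hAu]
    simp only [dotProduct_add, dotProduct_smul, smul_eq_mul, dotProduct_comm r u, hur]
    ring
  have hEru : c * (r ⬝ᵥ E *ᵥ u) ≤ |c| * ρ * √(1 - c ^ 2) := by
    have h := hE r hrS u huS
    rw [hrr, hu, Real.sqrt_one, mul_one] at h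
    calc c * (r ⬝ᵥ E *ᵥ u) ≤ |c| * |r ⬝ᵥ E *ᵥ u| := by rw [← abs_mul]; exact le_abs_self _
      _ ≤ |c| * ρ * √(1 - c ^ 2) := by
        rw [mul_assoc]; exact mul_le_mul_of_nonneg_left h (abs_nonneg c)
  have hErr : r ⬝ᵥ E *ᵥ r ≤ ρ * (1 - c ^ 2) := by
    have h := hE r hrS r hrS
    rw [Real.mul_self_sqrt (dotProduct_self_nonneg r), hrr] at h
    exact (le_abs_self _).trans h
  have hArr := hgap r hur
  have hstat := dotProduct_mulVec_eq_of_isMax S hA hvS hv hmax hrS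
  rw [hrr] at hArr
  rw [hrv, hrAv] at hstat
  linarith [mul_le_mul_of_nonneg_right hμ (hrr ▸ dotProduct_self_nonneg r)]

/-- A Davis–Kahan type `sin θ` bound, `u ⬝ᵥ v` being `cos θ`. -/
lemma one_sub_sq_dotProduct_mul_le (hA : (Abar + E).IsHermitian) (huS : u ∈ S) (hvS : v ∈ S)
    (hu : u ⬝ᵥ u = 1) (hv : v ⬝ᵥ v = 1) (hAu : Abar *ᵥ u = lam • u)
    (hgap : ∀ w, u ⬝ᵥ w = 0 → w ⬝ᵥ Abar *ᵥ w ≤ κ * (w ⬝ᵥ w))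
    (hE : ∀ x ∈ S, ∀ y ∈ S, |x ⬝ᵥ E *ᵥ y| ≤ ρ * (√(x ⬝ᵥ x) * √(y ⬝ᵥ y)))
    (hρ : 2 * ρ ≤ lam - κ)
    (hmax : ∀ z ∈ S, z ⬝ᵥ z = 1 → z ⬝ᵥ (Abar + E) *ᵥ z ≤ v ⬝ᵥ (Abar + E) *ᵥ v) :
    (1 - (u ⬝ᵥ v) ^ 2) * (ρ ^ 2 + (lam - κ - 2 * ρ) ^ 2) ≤ ρ ^ 2 := by
  have hsq := sq_mul_le_sq_of_mul_le_mul_sqrt (by linarith)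
    (sub_mul_one_sub_sq_le hA huS hvS hu hv hAu hgap hE hmax)
  rw [mul_pow, sq_abs] at hsq
  linarith

end SinTheta

lemma nrm2_eq_sqrt_dotProduct {p : ℕ} (x : Fin p → ℝ) : nrm2 x = √(x ⬝ᵥ x) := by
  simp only [nrm2, dotProduct, sq]

lemma nrm2_eq_one_iff {p : ℕ} {x : Fin p → ℝ} : nrm2 x = 1 ↔ x ⬝ᵥ x = 1 := by
  rw [nrm2_eq_sqrt_dotProduct, Real.sqrt_eq_one]

lemma min_nrm2_sub_nrm2_add_le {p : ℕ} {u v : Fin p → ℝ} (hu : u ⬝ᵥ u = 1) (hv : v ⬝ᵥ v = 1) :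
    min (nrm2 (v - u)) (nrm2 (v + u)) ≤ √(2 * (1 - (u ⬝ᵥ v) ^ 2)) := by
  have hsub : (v - u) ⬝ᵥ (v - u) = 2 - 2 * (u ⬝ᵥ v) := by
    simp only [sub_dotProduct, dotProduct_sub, hu, hv, dotProduct_comm v u]
    ring
  have hadd : (v + u) ⬝ᵥ (v + u) = 2 + 2 * (u ⬝ᵥ v) := by
    simp only [add_dotProduct, dotProduct_add, hu, hv, dotProduct_comm v u]
    ring
  have hsub0 : 0 ≤ 2 - 2 * (u ⬝ᵥ v) := hsub ▸ dotProduct_self_nonneg (v - u)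
  have hadd0 : 0 ≤ 2 + 2 * (u ⬝ᵥ v) := hadd ▸ dotProduct_self_nonneg (v + u)
  rw [nrm2_eq_sqrt_dotProduct, nrm2_eq_sqrt_dotProduct, hsub, hadd]
  rcases le_total 0 (u ⬝ᵥ v) with hc | hc
  · exact (min_le_left _ _).trans (Real.sqrt_le_sqrt (by nlinarith))
  · exact (min_le_right _ _).trans (Real.sqrt_le_sqrt (by nlinarith))

lemma sqrt_two_mul_le_of_mul_le {t ρ g : ℝ} (hρ : 0 ≤ ρ) (hpos : 0 < ρ ^ 2 + g ^ 2)
    (h : t * (ρ ^ 2 + g ^ 2) ≤ ρ ^ 2) : √(2 * t) ≤ √2 * ρ / √(ρ ^ 2 + g ^ 2) := by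
  rw [le_div_iff₀ (Real.sqrt_pos.2 hpos)]
  calc √(2 * t) * √(ρ ^ 2 + g ^ 2) = √2 * √(t * (ρ ^ 2 + g ^ 2)) := by
        rw [Real.sqrt_mul zero_le_two, Real.sqrt_mul' _ hpos.le, mul_assoc]
    _ ≤ √2 * ρ := mul_le_mul_of_nonneg_left
        ((Real.sqrt_le_sqrt h).trans_eq (Real.sqrt_sq hρ)) (Real.sqrt_nonneg 2)

section Supported

variable {p : ℕ} {F : Finset (Fin p)} {x y : Fin p → ℝ}

def supportedOn (F : Finset (Fin p)) : Submodule ℝ (Fin p → ℝ) :=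
  Submodule.pi (F : Set (Fin p))ᶜ fun _ => ⊥

lemma mem_supportedOn_iff_supp_subset : x ∈ supportedOn F ↔ supp x ⊆ F := by
  simp only [supportedOn, Submodule.mem_pi, Set.mem_compl_iff, Finset.mem_coe,
    Submodule.mem_bot, Finset.subset_iff, supp, Finset.mem_filter, Finset.mem_univ, true_and]
  exact forall_congr' fun i => not_imp_comm

lemma dotProduct_eq_subtype (hx : x ∈ supportedOn F) (y : Fin p → ℝ) :
    x ⬝ᵥ y = (fun i : F => x i) ⬝ᵥ fun i : F => y i := by
  have hx' : ∀ i ∉ F, x i = 0 := fun i hi => (Submodule.mem_pi.1 hx) i hi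
  rw [dotProduct, dotProduct, Finset.sum_coe_sort F fun i => x i * y i]
  exact (Finset.sum_subset (Finset.subset_univ F) fun i _ hi => by rw [hx' i hi, zero_mul]).symm

lemma subm_mulVec (E : Matrix (Fin p) (Fin p) ℝ) (hy : y ∈ supportedOn F) :
    (subm E F *ᵥ fun j : F => y j) = fun i : F => (E *ᵥ y) i := by
  ext i
  change (fun j : F => E i j) ⬝ᵥ (fun j : F => y j) = E i ⬝ᵥ y
  rw [dotProduct_comm (E i), dotProduct_eq_subtype hy, dotProduct_comm]

lemma specNorm_subm_le_rhoRes (E : Matrix (Fin p) (Fin p) ℝ) {s : ℕ} (hF : F.card = s) :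
    specNorm (subm E F) ≤ rhoRes E s := by
  refine le_csSup ((Set.finite_range fun G => specNorm (subm E G)).bddAbove.mono ?_) ⟨F, hF, rfl⟩
  rintro _ ⟨G, -, rfl⟩
  exact ⟨G, rfl⟩

lemma rhoRes_nonneg (E : Matrix (Fin p) (Fin p) ℝ) (s : ℕ) : 0 ≤ rhoRes E s :=
  Real.sSup_nonneg <| by
    rintro _ ⟨G, -, rfl⟩
    exact specNorm_nonneg _

lemma abs_dotProduct_mulVec_le_rhoRes {E : Matrix (Fin p) (Fin p) ℝ} (hE : E.IsHermitian)
    {s : ℕ} (hF : F.card = s) (hx : x ∈ supportedOn F) (hy : y ∈ supportedOn F) :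
    |x ⬝ᵥ E *ᵥ y| ≤ rhoRes E s * (√(x ⬝ᵥ x) * √(y ⬝ᵥ y)) := by
  rw [dotProduct_eq_subtype hx, ← subm_mulVec E hy, dotProduct_eq_subtype hx x,
    dotProduct_eq_subtype hy y]
  exact (abs_dotProduct_mulVec_le (hE.submatrix _) _ _).trans
    (mul_le_mul_of_nonneg_right (specNorm_subm_le_rhoRes E hF) (by positivity))

end Supported

theorem statement3_general (p s : ℕ)
    (Abar E : Matrix (Fin p) (Fin p) ℝ)
    (hAbar : Abar.IsHermitian) (hE : E.IsHermitian)
    (lam dlam : ℝ) (i0 : Fin p)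
    (hdlam_pos : 0 < dlam)
    (hgap_le : ∀ j, j ≠ i0 → |hAbar.eigenvalues j| ≤ lam - dlam)
    (xbar : Fin p → ℝ)
    (hxbar_eig : Abar.mulVec xbar = lam • xbar)
    (hxbar_norm : nrm2 xbar = 1)
    (F : Finset (Fin p)) (hFsupp : supp xbar ⊆ F) (hFcard : F.card = s)
    (hrho : rhoRes E s ≤ dlam / 2)
    (ds : ℝ)
    (hds : ds = Real.sqrt 2 * rhoRes E s /
      Real.sqrt ((rhoRes E s) ^ 2 + (dlam - 2 * rhoRes E s) ^ 2))
    (xF : Fin p → ℝ) (hxFsupp : supp xF ⊆ F) (hxFnorm : nrm2 xF = 1)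
    (hxFmax : ∀ z : Fin p → ℝ, supp z ⊆ F → nrm2 z = 1 →
      dotp z ((Abar + E).mulVec z) ≤ dotp xF ((Abar + E).mulVec xF)) :
    min (nrm2 (xF - xbar)) (nrm2 (xF + xbar)) ≤ ds := by
  rw [nrm2_eq_one_iff] at hxbar_norm hxFnorm
  rw [← mem_supportedOn_iff_supp_subset] at hFsupp hxFsupp
  have hρ := rhoRes_nonneg E s
  have hgap (w : Fin p → ℝ) (hw : xbar ⬝ᵥ w = 0) :
      w ⬝ᵥ Abar *ᵥ w ≤ (lam - dlam) * (w ⬝ᵥ w) :=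
    dotProduct_mulVec_le_of_dotProduct_eq_zero hAbar
      (fun j hj => (le_abs_self _).trans (hgap_le j hj)) (by linarith) hxbar_eig
      (by rintro rfl; simp at hxbar_norm) hw
  have hsin := one_sub_sq_dotProduct_mul_le (hAbar.add hE) hFsupp hxFsupp hxbar_norm hxFnorm
    hxbar_eig hgap (fun x hx y hy => abs_dotProduct_mulVec_le_rhoRes hE hFcard hx hy)
    (by linarith) fun z hz hz1 =>
      hxFmax z (mem_supportedOn_iff_supp_subset.1 hz) (nrm2_eq_one_iff.2 hz1)
  rw [sub_sub_cancel] at hsin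
  have hpos : 0 < rhoRes E s ^ 2 + (dlam - 2 * rhoRes E s) ^ 2 := by
    nlinarith [sq_nonneg (rhoRes E s - 2 * (dlam - 2 * rhoRes E s)),
      mul_pos hdlam_pos hdlam_pos]
  calc min _ _ ≤ √(2 * (1 - (xbar ⬝ᵥ xF) ^ 2)) := min_nrm2_sub_nrm2_add_le hxbar_norm hxFnorm
    _ ≤ ds := hds ▸ sqrt_two_mul_le_of_mul_le hρ hpos hsin

theorem statement3 (p kbar s : ℕ)
    (Abar E : Matrix (Fin p) (Fin p) ℝ)
    (hAbar : Abar.IsHermitian) (hE : E.IsHermitian)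
    (lam dlam : ℝ) (i0 : Fin p)
    (hi0 : hAbar.eigenvalues i0 = lam)
    (hlam_pos : 0 < lam) (hdlam_pos : 0 < dlam)
    (hgap_le : ∀ j, j ≠ i0 → |hAbar.eigenvalues j| ≤ lam - dlam)
    (hgap_eq : ∃ j, j ≠ i0 ∧ |hAbar.eigenvalues j| = lam - dlam)
    (xbar : Fin p → ℝ)
    (hxbar_eig : Abar.mulVec xbar = lam • xbar)
    (hxbar_norm : nrm2 xbar = 1)
    (hxbar_supp : (supp xbar).card = kbar)
    (F : Finset (Fin p)) (hFsupp : supp xbar ⊆ F) (hFcard : F.card = s)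
    (hrho : rhoRes E s ≤ dlam / 2)
    (ds : ℝ)
    (hds : ds = Real.sqrt 2 * rhoRes E s /
      Real.sqrt ((rhoRes E s) ^ 2 + (dlam - 2 * rhoRes E s) ^ 2))
    (xF : Fin p → ℝ) (hxFsupp : supp xF ⊆ F) (hxFnorm : nrm2 xF = 1)
    (hxFmax : ∀ z : Fin p → ℝ, supp z ⊆ F → nrm2 z = 1 →
      dotp z ((Abar + E).mulVec z) ≤ dotp xF ((Abar + E).mulVec xF)) :
    min (nrm2 (xF - xbar)) (nrm2 (xF + xbar)) ≤ ds :=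
  statement3_general p s Abar E hAbar hE lam dlam i0 hdlam_pos hgap_le xbar hxbar_eig hxbar_norm F
    hFsupp hFcard hrho ds hds xF hxFsupp hxFnorm hxFmax

end TPaper
end

section
/- Let x̄ be a unit vector in ℝ^p whose support F̄ has cardinality k̄, let y be a unit vector in ℝ^p, let k be an integer with k̄ ≤ k ≤ p, and let F be a top-k index set for y. If Δ = yᵀx̄ satisfies Δ ≥ √(k̄/(k̄+k)), then the squared Euclidean norm of the restriction of y to the coordinates in F̄ \ F is at most (k̄/k)·(1 - Δ²), and in particular at most Δ². -/
/-!
Write `S = F̄ \ F`, `T = F \ F̄`, `I = F̄ ∩ F`, so `|S| + |I| = k̄ ≤ k = |T| + |I|`. Every coordinate of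
`y` on `S` is dominated by every coordinate on `T` (`S` lies outside the top-`k` set, `T` inside it),
so comparing averages gives `‖y_S‖² ≤ (k̄/k) ‖y_T‖²`. Since `T` is disjoint from the support of `x̄`,
Cauchy–Schwarz on `F̄` gives `Δ² + ‖y_T‖² ≤ ‖y‖² = 1`. The second bound is the first one rewritten
with `Δ² ≥ k̄/(k̄+k)`.
-/

namespace TPaper

lemma nrm2_sq {p : ℕ} (x : Fin p → ℝ) : nrm2 x ^ 2 = ∑ i, x i ^ 2 :=
  Real.sq_sqrt (Finset.sum_nonneg fun _ _ => sq_nonneg _)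

lemma nrm2_Trunc_sq {p : ℕ} (x : Fin p → ℝ) (S : Finset (Fin p)) :
    nrm2 (Trunc x S) ^ 2 = ∑ i ∈ S, x i ^ 2 := by
  simp [nrm2_sq, Trunc, ite_pow, Finset.sum_ite_mem]

lemma dotp_eq_sum_supp {p : ℕ} (y x : Fin p → ℝ) : dotp y x = ∑ i ∈ supp x, y i * x i := by
  refine (Finset.sum_subset (Finset.subset_univ _) fun i _ hi => ?_).symm
  simp_all [supp]

lemma sum_sq_eq_sum_supp {p : ℕ} (x : Fin p → ℝ) : ∑ i, x i ^ 2 = ∑ i ∈ supp x, x i ^ 2 := by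
  refine (Finset.sum_subset (Finset.subset_univ _) fun i _ hi => ?_).symm
  simp_all [supp]

lemma sq_dotp_add_sum_sq_le {p : ℕ} (y x : Fin p → ℝ) (hx : nrm2 x = 1) (T : Finset (Fin p))
    (hT : Disjoint (supp x) T) : dotp y x ^ 2 + ∑ i ∈ T, y i ^ 2 ≤ nrm2 y ^ 2 := by
  have hx2 : ∑ i ∈ supp x, x i ^ 2 = 1 := by rw [← sum_sq_eq_sum_supp, ← nrm2_sq, hx, one_pow]
  have hCS : dotp y x ^ 2 ≤ ∑ i ∈ supp x, y i ^ 2 := by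
    simpa [dotp_eq_sum_supp, hx2] using Finset.sum_mul_sq_le_sq_mul_sq (supp x) y x
  calc dotp y x ^ 2 + ∑ i ∈ T, y i ^ 2
      ≤ ∑ i ∈ supp x ∪ T, y i ^ 2 := by rw [Finset.sum_union hT]; linarith
    _ ≤ ∑ i, y i ^ 2 :=
        Finset.sum_le_sum_of_subset_of_nonneg (Finset.subset_univ _) fun i _ _ => sq_nonneg _
    _ = nrm2 y ^ 2 := (nrm2_sq y).symm

lemma sum_mul_card_le_card_mul_sum {ι : Type*} {f : ι → ℝ} {S T : Finset ι}
    (h : ∀ i ∈ S, ∀ j ∈ T, f i ≤ f j) : (∑ i ∈ S, f i) * T.card ≤ S.card * ∑ j ∈ T, f j := by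
  calc (∑ i ∈ S, f i) * T.card = ∑ i ∈ S, ∑ _j ∈ T, f i := by simp [Finset.sum_mul, mul_comm]
    _ ≤ ∑ _i ∈ S, ∑ j ∈ T, f j :=
        Finset.sum_le_sum fun i hi => Finset.sum_le_sum fun j hj => h i hi j hj
    _ = S.card * ∑ j ∈ T, f j := by simp

lemma IsTopK.sq_le_sq_of_notMem_of_mem {p k : ℕ} {y : Fin p → ℝ} {F : Finset (Fin p)}
    (hF : IsTopK y k F) {i j : Fin p} (hi : i ∉ F) (hj : j ∈ F) : y i ^ 2 ≤ y j ^ 2 :=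
  sq_le_sq.mpr (hF.2 j hj i hi)

lemma IsTopK.sum_sq_sdiff_le {p k : ℕ} {y : Fin p → ℝ} {F : Finset (Fin p)} (hF : IsTopK y k F)
    (G : Finset (Fin p)) (hG : G.card ≤ k) :
    ∑ i ∈ G \ F, y i ^ 2 ≤ (G.card / k : ℝ) * ∑ i ∈ F \ G, y i ^ 2 := by
  set b := ∑ i ∈ G \ F, y i ^ 2
  set c := ∑ i ∈ F \ G, y i ^ 2
  have hS := Finset.card_sdiff_add_card_inter G F
  have hT := Finset.card_sdiff_add_card_inter F G
  rw [Finset.inter_comm, hF.1] at hT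
  have hST : (G \ F).card ≤ (F \ G).card := by omega
  have hbc : b * (F \ G).card ≤ (G \ F).card * c :=
    sum_mul_card_le_card_mul_sum fun i hi j hj =>
      hF.sq_le_sq_of_notMem_of_mem (Finset.mem_sdiff.mp hi).2 (Finset.mem_sdiff.mp hj).1
  have hc : 0 ≤ c := Finset.sum_nonneg fun i _ => sq_nonneg _
  have hb_le_c : b ≤ c := by
    rcases Nat.eq_zero_or_pos (F \ G).card with hT0 | hT0
    · have : G \ F = ∅ := Finset.card_eq_zero.mp (by omega)
      simp [b, this, hc]
    · have : ((G \ F).card : ℝ) ≤ (F \ G).card := by exact_mod_cast hST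
      have : (0 : ℝ) < (F \ G).card := by exact_mod_cast hT0
      nlinarith
  rcases Nat.eq_zero_or_pos k with hk | hk
  · have : G \ F = ∅ := Finset.card_eq_zero.mp (by omega)
    simp [b, this, hk]
  rw [div_mul_eq_mul_div, le_div_iff₀ (by exact_mod_cast hk), ← hS, ← hT]
  push_cast
  nlinarith [(Nat.cast_nonneg (G ∩ F).card : (0 : ℝ) ≤ _)]

lemma div_mul_one_sub_sq_le_sq {a b t : ℝ} (ha : 0 ≤ a) (hb : 0 ≤ b) (h : √(a / (a + b)) ≤ t) :
    a / b * (1 - t ^ 2) ≤ t ^ 2 := by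
  have ht : 0 ≤ t := (Real.sqrt_nonneg _).trans h
  rcases hb.eq_or_lt with rfl | hb
  · simpa using sq_nonneg t
  have hfrac := (Real.sqrt_le_left ht).mp h
  rw [div_le_iff₀ (by positivity)] at hfrac
  rw [div_mul_eq_mul_div, div_le_iff₀ hb]
  linarith

theorem statement9_general (p kbar k : ℕ) (hk : kbar ≤ k)
    (xbar y : Fin p → ℝ)
    (hxbar_norm : nrm2 xbar = 1) (hxbar_supp : (supp xbar).card = kbar)
    (hy_norm : nrm2 y = 1)
    (F : Finset (Fin p)) (hF : IsTopK y k F)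
    (hDelta : Real.sqrt ((kbar : ℝ) / (kbar + k)) ≤ dotp y xbar) :
    (nrm2 (Trunc y (supp xbar \ F))) ^ 2 ≤ ((kbar : ℝ) / k) * (1 - (dotp y xbar) ^ 2) ∧
      (nrm2 (Trunc y (supp xbar \ F))) ^ 2 ≤ (dotp y xbar) ^ 2 := by
  have hmass : ∑ i ∈ F \ supp xbar, y i ^ 2 ≤ 1 - dotp y xbar ^ 2 := by
    have := sq_dotp_add_sum_sq_le y xbar hxbar_norm (F \ supp xbar) Finset.disjoint_sdiff
    rw [hy_norm] at this
    linarith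
  have htop := hF.sum_sq_sdiff_le (supp xbar) (hxbar_supp ▸ hk)
  rw [hxbar_supp] at htop
  have hfirst : nrm2 (Trunc y (supp xbar \ F)) ^ 2 ≤ (kbar / k : ℝ) * (1 - dotp y xbar ^ 2) := by
    rw [nrm2_Trunc_sq]
    exact htop.trans (mul_le_mul_of_nonneg_left hmass (by positivity))
  exact ⟨hfirst, hfirst.trans (div_mul_one_sub_sq_le_sq (by positivity) (by positivity) hDelta)⟩

theorem statement9 (p kbar k : ℕ) (hk : kbar ≤ k) (hkp : k ≤ p)
    (xbar y : Fin p → ℝ)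
    (hxbar_norm : nrm2 xbar = 1) (hxbar_supp : (supp xbar).card = kbar)
    (hy_norm : nrm2 y = 1)
    (F : Finset (Fin p)) (hF : IsTopK y k F)
    (hDelta : Real.sqrt ((kbar : ℝ) / (kbar + k)) ≤ dotp y xbar) :
    (nrm2 (Trunc y (supp xbar \ F))) ^ 2 ≤ ((kbar : ℝ) / k) * (1 - (dotp y xbar) ^ 2) ∧
      (nrm2 (Trunc y (supp xbar \ F))) ^ 2 ≤ (dotp y xbar) ^ 2 :=
  statement9_general p kbar k hk xbar y hxbar_norm hxbar_supp hy_norm F hF hDelta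

end TPaper
end

section
/- Let A be a p×p real symmetric positive semidefinite matrix and 1 ≤ k ≤ p. Then the largest diagonal entry of A satisfies max_i [A]_{ii} ≥ λ_max(A,k)/k, where λ_max(A,k) = sup { xᵀAx : x ∈ ℝ^p, ‖x‖ = 1, ‖x‖₀ ≤ k } is the largest k-sparse eigenvalue of A. -/
/-! By Cauchy–Schwarz for the form `(x, y) ↦ xᵀAy`, every entry of a positive semidefinite
matrix satisfies `A i j ^ 2 ≤ A i i * A j j ≤ m ^ 2`, where `m` is the largest diagonal entry.
So for a unit vector `x` with at most `k` nonzero entries,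
`xᵀAx ≤ m ‖x‖₁² ≤ m k ‖x‖₂² = m k`, the middle step being Cauchy–Schwarz on the support. -/

namespace TPaper

open Matrix

lemma _root_.Matrix.PosSemidef.apply_mul_apply_le {n : Type*} [Fintype n] [DecidableEq n]
    {A : Matrix n n ℝ} (hA : A.PosSemidef) (i j : n) :
    A i j * A j i ≤ A i i * A j j := by
  have hform : ∀ x, 0 ≤ toLinearMap₂' ℝ A x x := fun x => by
    rw [toLinearMap₂'_apply']
    simpa using hA.dotProduct_mulVec_nonneg x
  simpa [toLinearMap₂'_apply'] using
    LinearMap.BilinForm.apply_mul_apply_le_of_forall_zero_le _ hform (Pi.single i 1) (Pi.single j 1)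

lemma _root_.Matrix.PosSemidef.abs_apply_le_of_diag_le {n : Type*} [Fintype n] [DecidableEq n]
    {A : Matrix n n ℝ} (hA : A.PosSemidef) {m : ℝ} (hm : ∀ j, A j j ≤ m) (i j : n) :
    |A i j| ≤ m := by
  have hsymm : A j i = A i j := hA.isHermitian.apply i j
  have hm0 : 0 ≤ m := hA.diag_nonneg.trans (hm i)
  refine abs_le_of_sq_le_sq ?_ hm0
  calc A i j ^ 2 = A i j * A j i := by rw [hsymm, sq]
    _ ≤ A i i * A j j := hA.apply_mul_apply_le i j
    _ ≤ m ^ 2 := by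
      rw [sq]
      exact mul_le_mul (hm i) (hm j) hA.diag_nonneg hm0

lemma dotProduct_mulVec_le_of_abs_apply_le {n : Type*} [Fintype n] {A : Matrix n n ℝ}
    {m : ℝ} (hm : ∀ i j, |A i j| ≤ m) (x : n → ℝ) :
    x ⬝ᵥ A *ᵥ x ≤ m * (∑ i, |x i|) ^ 2 := by
  have hterm : ∀ i j, x i * (A i j * x j) ≤ m * (|x i| * |x j|) := fun i j =>
    calc x i * (A i j * x j) ≤ |x i * (A i j * x j)| := le_abs_self _
      _ = |A i j| * (|x i| * |x j|) := by rw [abs_mul, abs_mul]; ring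
      _ ≤ m * (|x i| * |x j|) := by gcongr; exact hm i j
  calc x ⬝ᵥ A *ᵥ x = ∑ i, ∑ j, x i * (A i j * x j) := by
        simp only [dotProduct, mulVec, Finset.mul_sum]
    _ ≤ ∑ i, ∑ j, m * (|x i| * |x j|) :=
        Finset.sum_le_sum fun i _ => Finset.sum_le_sum fun j _ => hterm i j
    _ = m * (∑ i, |x i|) ^ 2 := by
        rw [sq, Finset.sum_mul_sum, Finset.mul_sum]
        simp only [Finset.mul_sum]

lemma sq_sum_abs_le_card_supp_mul_sum_sq {p : ℕ} (x : Fin p → ℝ) :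
    (∑ i, |x i|) ^ 2 ≤ ((supp x).card : ℝ) * ∑ i, x i ^ 2 := by
  have hsupp : ∀ f : ℝ → ℝ, f 0 = 0 → ∑ i ∈ supp x, f (x i) = ∑ i, f (x i) :=
    fun f hf0 => Finset.sum_filter_of_ne fun i _ hi h0 => hi (by rw [h0, hf0])
  rw [← hsupp _ abs_zero, ← hsupp (· ^ 2) (zero_pow two_ne_zero)]
  simpa only [sq_abs] using sq_sum_le_card_mul_sum_sq (s := supp x) (f := fun i => |x i|)

lemma sum_sq_eq_one_of_nrm2_eq_one {p : ℕ} {x : Fin p → ℝ} (hx : nrm2 x = 1) :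
    ∑ i, x i ^ 2 = 1 :=
  Real.sqrt_eq_one.mp hx

theorem statement13 (p k : ℕ) (hk1 : 1 ≤ k) (hkp : k ≤ p)
    (A : Matrix (Fin p) (Fin p) ℝ) (hA : A.PosSemidef) :
    ∃ i : Fin p,
      sSup {r : ℝ | ∃ x : Fin p → ℝ,
          nrm2 x = 1 ∧ (supp x).card ≤ k ∧ r = dotp x (A.mulVec x)} / k ≤
        A i i := by
  have : Nonempty (Fin p) := Fin.pos_iff_nonempty.mp (hk1.trans hkp)
  obtain ⟨i, hi⟩ := Finite.exists_max fun j => A j j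
  refine ⟨i, (div_le_iff₀ (by exact_mod_cast hk1)).mpr ?_⟩
  refine Real.sSup_le ?_ (mul_nonneg hA.diag_nonneg k.cast_nonneg)
  rintro r ⟨x, hx, hxk, rfl⟩
  calc dotp x (A *ᵥ x) ≤ A i i * (∑ j, |x j|) ^ 2 :=
        dotProduct_mulVec_le_of_abs_apply_le (hA.abs_apply_le_of_diag_le hi) x
    _ ≤ A i i * ((supp x).card * ∑ j, x j ^ 2) :=
        mul_le_mul_of_nonneg_left (sq_sum_abs_le_card_supp_mul_sum_sq x) hA.diag_nonneg
    _ ≤ A i i * k := by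
        rw [sum_sq_eq_one_of_nrm2_eq_one hx, mul_one]
        exact mul_le_mul_of_nonneg_left (by exact_mod_cast hxk) hA.diag_nonneg

end TPaper
end
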